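/- Let xi have independent coordinates with E xi_i = 0, E xi_i^2 = 1, and E|xi_i|^3 < infinity. Then for any C^3-smooth f : R^n -> R with suitable integrability, E[L f(xi)] = sum_i E[xi_i * integral_0^1 partial_i^3 f(xi^(i) + s*xi_i*e_i) ds] - sum_i E[xi_i^3 * integral_0^1 (1-s) * partial_i^3 f(xi^(i) + s*xi_i*e_i) ds], where xi^(i) = xi - xi_i e_i. -/

import Mathlib

/-!
Fix a coordinate `i` and write `ξ⁽ⁱ⁾ = ξ - ξᵢ eᵢ`. Taylor's formula with integral remainder in the
`i`-th variable, around `ξ⁽ⁱ⁾`, expands `∂ᵢ²f(ξ)` to first order and `∂ᵢf(ξ)` to second order.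
Since `ξᵢ` is independent of `ξ⁽ⁱ⁾`, with `E ξᵢ = 0` and `E ξᵢ² = 1`, the terms
`E[ξᵢ ∂ᵢf(ξ⁽ⁱ⁾)]` and `E[ξᵢ² ∂ᵢ²f(ξ⁽ⁱ⁾)] - E[∂ᵢ²f(ξ⁽ⁱ⁾)]` vanish, so only the two remainders
survive in `E[∂ᵢ²f(ξ) - ξᵢ ∂ᵢf(ξ)]`; summing over `i` gives `E[L f(ξ)]`.
-/

open Finset MeasureTheory ProbabilityTheory Function

open scoped Nat

theorem eq_sum_add_integral_iteratedDeriv {F : Type*} [NormedAddCommGroup F] [NormedSpace ℝ F]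
    [CompleteSpace F] {n : ℕ} {h : ℝ → F} (hh : ContDiff ℝ (n + 1) h) (t : ℝ) :
    h t = ∑ k ∈ range (n + 1), (t ^ k / k !) • iteratedDeriv k h 0 +
      (t ^ (n + 1) / n !) • ∫ s in (0 : ℝ)..1, (1 - s) ^ n • iteratedDeriv (n + 1) h (s * t) := by
  have := map_add_eq_sum_add_integral_iteratedFDeriv (x := 0) (y := t) fun s _ => hh.contDiffAt
  simp only [zero_add, iteratedFDeriv_apply_eq_iteratedDeriv_mul_prod, prod_const, card_fin,
    smul_smul, smul_eq_mul] at this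
  rw [this]
  congr 1
  · exact sum_congr rfl fun k _ => by rw [div_eq_inv_mul]
  · rw [← intervalIntegral.integral_smul, ← intervalIntegral.integral_smul]
    congr 1; funext s
    simp only [smul_smul, pow_succ]
    congr 1; ring

theorem abs_intervalIntegral_zero_one_le {g : ℝ → ℝ} {B : ℝ}
    (h : ∀ s ∈ Set.Icc (0 : ℝ) 1, |g s| ≤ B) : |∫ s in (0 : ℝ)..1, g s| ≤ B := by
  simpa using intervalIntegral.norm_integral_le_of_norm_le_const (a := 0) (b := 1) (f := g)
    fun s hs => h s (Set.Ioc_subset_Icc_self (by simpa using hs))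

theorem iteratedDeriv_comp_add_smul {𝕜 E F : Type*} [NontriviallyNormedField 𝕜]
    [NormedAddCommGroup E] [NormedSpace 𝕜 E] [NormedAddCommGroup F] [NormedSpace 𝕜 F]
    {f : E → F} {N : WithTop ℕ∞} (hf : ContDiff 𝕜 N f) (x y : E) {k : ℕ} (hk : k ≤ N) :
    iteratedDeriv k (fun s : 𝕜 => f (x + s • y)) =
      fun t => iteratedFDeriv 𝕜 k f (x + t • y) (fun _ => y) := by
  induction k with
  | zero => ext t; simp
  | succ k ih =>
    ext t
    rw [iteratedDeriv_succ, ih (le_trans (by exact_mod_cast k.le_succ) hk)]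
    exact (hf.of_le hk).contDiffAt.deriv_fderiv_add_smul

theorem Function.update_eq_update_zero_add_smul_single {ι R : Type*} [DecidableEq ι] [Semiring R]
    (x : ι → R) (i : ι) (s : R) :
    update x i s = update x i 0 + s • Pi.single i 1 := by
  ext j; by_cases h : j = i <;> simp [h]

section IteratedPartialDeriv

variable {ι F : Type*} [DecidableEq ι] [NormedAddCommGroup F] [NormedSpace ℝ F]

/-- The paper's `∂ᵢᵏ f (x)`. -/
noncomputable def iteratedPartialDeriv (k : ℕ) (i : ι) (f : (ι → ℝ) → F) (x : ι → ℝ) : F :=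
  iteratedDeriv k (fun s => f (update x i s)) (x i)

theorem iteratedPartialDeriv_update (k : ℕ) (i : ι) (f : (ι → ℝ) → F) (x : ι → ℝ) (t : ℝ) :
    iteratedPartialDeriv k i f (update x i t) =
      iteratedDeriv k (fun s => f (update x i s)) t := by
  simp [iteratedPartialDeriv]

variable [Fintype ι] {f : (ι → ℝ) → F}

theorem iteratedPartialDeriv_eq_iteratedFDeriv {N : WithTop ℕ∞} (hf : ContDiff ℝ N f) {k : ℕ}
    (hk : k ≤ N) (i : ι) :
    iteratedPartialDeriv k i f = fun x => iteratedFDeriv ℝ k f x (fun _ => Pi.single i 1) := by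
  ext x
  have hline : (fun s => f (update x i s)) =
      fun s => f (update x i 0 + s • Pi.single i 1) := by
    simp only [← update_eq_update_zero_add_smul_single]
  rw [iteratedPartialDeriv, hline, iteratedDeriv_comp_add_smul hf _ _ hk]
  dsimp only
  rw [← update_eq_update_zero_add_smul_single, update_eq_self]

theorem continuous_iteratedPartialDeriv {N : WithTop ℕ∞} (hf : ContDiff ℝ N f) {k : ℕ}
    (hk : k ≤ N) (i : ι) : Continuous (iteratedPartialDeriv k i f) := by
  rw [iteratedPartialDeriv_eq_iteratedFDeriv hf hk]
  fun_prop

variable [CompleteSpace F]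

theorem iteratedPartialDeriv_two_eq (hf : ContDiff ℝ 3 f) (i : ι) (x : ι → ℝ) :
    iteratedPartialDeriv 2 i f x = iteratedPartialDeriv 2 i f (update x i 0) +
      x i • ∫ s in (0 : ℝ)..1, iteratedPartialDeriv 3 i f (update x i (s * x i)) := by
  set g := fun s => f (update x i s)
  have hg : ContDiff ℝ (1 + 2 : ℕ) g := hf.comp (contDiff_update 3 x i)
  have := eq_sum_add_integral_iteratedDeriv (n := 0) (hg.iterate_deriv' 1 2) (x i)
  conv_lhs => rw [← update_eq_self i x]
  simp only [iteratedPartialDeriv_update, iteratedDeriv_eq_iterate] at this ⊢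
  simpa [← iterate_succ_apply' deriv] using this

theorem iteratedPartialDeriv_one_eq (hf : ContDiff ℝ 3 f) (i : ι) (x : ι → ℝ) :
    iteratedPartialDeriv 1 i f x = iteratedPartialDeriv 1 i f (update x i 0) +
      x i • iteratedPartialDeriv 2 i f (update x i 0) +
      x i ^ 2 • ∫ s in (0 : ℝ)..1,
        (1 - s) • iteratedPartialDeriv 3 i f (update x i (s * x i)) := by
  set g := fun s => f (update x i s)
  have hg : ContDiff ℝ (2 + 1 : ℕ) g := hf.comp (contDiff_update 3 x i)
  have := eq_sum_add_integral_iteratedDeriv (n := 1) (hg.iterate_deriv' 2 1) (x i)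
  conv_lhs => rw [← update_eq_self i x]
  simp only [iteratedPartialDeriv_update, iteratedDeriv_eq_iterate] at this ⊢
  simpa [sum_range_succ, ← iterate_succ_apply' deriv, add_assoc] using this

end IteratedPartialDeriv

section Probability

variable {Ω : Type*} [MeasurableSpace Ω] {μ : Measure Ω}

theorem ProbabilityTheory.iIndepFun.indepFun_update {ι β : Type*} [Fintype ι] [DecidableEq ι]
    [MeasurableSpace β] {ξ : Ω → ι → β} (hξ : iIndepFun (fun i ω => ξ ω i) μ)
    (hmeas : ∀ i, Measurable fun ω => ξ ω i) (i : ι) (c : β) :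
    IndepFun (fun ω => ξ ω i) (fun ω => update (ξ ω) i c) μ := by
  let extend : (({i}ᶜ : Finset ι) → β) → ι → β := fun v j =>
    if h : j ∈ ({i}ᶜ : Finset ι) then v ⟨j, h⟩ else c
  have hextend : Measurable extend := by
    refine measurable_pi_lambda _ fun j => ?_
    by_cases h : j ∈ ({i}ᶜ : Finset ι)
    · simp only [extend, dif_pos h]
      exact measurable_pi_apply _
    · simp only [extend, dif_neg h]
      exact measurable_const
  have hupdate : (fun ω => update (ξ ω) i c) =
      extend ∘ fun ω (j : ({i}ᶜ : Finset ι)) => ξ ω j := by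
    ext ω j
    by_cases h : j = i <;> simp [extend, h]
  rw [hupdate]
  exact (hξ.indepFun_finset {i} {i}ᶜ disjoint_compl_right hmeas).comp
    (measurable_pi_apply ⟨i, mem_singleton_self i⟩) hextend

theorem integrable_pow_of_integrable_abs_pow [IsFiniteMeasure μ] {X : Ω → ℝ}
    (hX : AEStronglyMeasurable X μ) {p q : ℕ} (hpq : p ≤ q)
    (hint : Integrable (fun ω => |X ω| ^ q) μ) : Integrable (fun ω => X ω ^ p) μ :=
  (integrable_norm_pow_of_le hX hpq hint).mono' (hX.pow p)
    (ae_of_all _ fun _ => (norm_pow _ _).le)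

theorem MeasureTheory.Integrable.mul_comp_of_abs_le {E : Type*} [MeasurableSpace E] {X : Ω → ℝ}
    (hX : Integrable X μ) {Y : Ω → E} (hY : Measurable Y) {g : E → ℝ} (hg : Measurable g)
    {B : ℝ} (hgB : ∀ y, |g y| ≤ B) : Integrable (fun ω => X ω * g (Y ω)) μ :=
  hX.mul_bdd (hg.comp hY).aestronglyMeasurable (ae_of_all _ fun ω => hgB (Y ω))

end Probability

section Stein

variable {ι Ω : Type*} [Fintype ι] [DecidableEq ι] [MeasurableSpace Ω] {μ : Measure Ω}
  [IsProbabilityMeasure μ] {ξ : Ω → ι → ℝ} {f : (ι → ℝ) → ℝ} {B : ℝ} {i : ι}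

theorem integral_iteratedPartialDeriv_two_eq (hξ : Measurable ξ)
    (hξi : Integrable (fun ω => ξ ω i) μ) (hf : ContDiff ℝ 3 f)
    (hB : ∀ k ≤ 3, ∀ x, |iteratedPartialDeriv k i f x| ≤ B) :
    ∫ ω, iteratedPartialDeriv 2 i f (ξ ω) ∂μ =
      ∫ ω, iteratedPartialDeriv 2 i f (update (ξ ω) i 0) ∂μ +
      ∫ ω, ξ ω i *
        (∫ s in (0 : ℝ)..1, iteratedPartialDeriv 3 i f (update (ξ ω) i (s * ξ ω i))) ∂μ := by
  have hcont2 := continuous_iteratedPartialDeriv hf (k := 2) (by norm_cast) i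
  have hcont3 := continuous_iteratedPartialDeriv hf (k := 3) le_rfl i
  have hR : Continuous fun x => ∫ s in (0 : ℝ)..1,
      iteratedPartialDeriv 3 i f (update x i (s * x i)) :=
    intervalIntegral.continuous_parametric_intervalIntegral_of_continuous' (by fun_prop) 0 1
  have hRB : ∀ x, |∫ s in (0 : ℝ)..1,
      iteratedPartialDeriv 3 i f (update x i (s * x i))| ≤ B := fun _ =>
    abs_intervalIntegral_zero_one_le fun s _ => hB 3 le_rfl _
  have hexpand : (fun ω => iteratedPartialDeriv 2 i f (ξ ω)) = fun ω =>
      iteratedPartialDeriv 2 i f (update (ξ ω) i 0) + ξ ω i *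
        ∫ s in (0 : ℝ)..1, iteratedPartialDeriv 3 i f (update (ξ ω) i (s * ξ ω i)) :=
    funext fun ω => by rw [iteratedPartialDeriv_two_eq hf, smul_eq_mul]
  have hint : Integrable (fun ω => iteratedPartialDeriv 2 i f (update (ξ ω) i 0)) μ :=
    .of_bound (by fun_prop) B (ae_of_all _ fun _ => hB 2 (by norm_num) _)
  rw [hexpand, integral_add hint (hξi.mul_comp_of_abs_le hξ hR.measurable hRB)]

theorem integral_mul_iteratedPartialDeriv_one_eq (hξ : Measurable ξ)
    (hindep : IndepFun (fun ω => ξ ω i) (fun ω => update (ξ ω) i 0) μ)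
    (hm1 : ∫ ω, ξ ω i ∂μ = 0) (hm2 : ∫ ω, ξ ω i ^ 2 ∂μ = 1)
    (hm3 : Integrable (fun ω => |ξ ω i| ^ 3) μ) (hf : ContDiff ℝ 3 f)
    (hB : ∀ k ≤ 3, ∀ x, |iteratedPartialDeriv k i f x| ≤ B) :
    ∫ ω, ξ ω i * iteratedPartialDeriv 1 i f (ξ ω) ∂μ =
      ∫ ω, iteratedPartialDeriv 2 i f (update (ξ ω) i 0) ∂μ +
      ∫ ω, ξ ω i ^ 3 * (∫ s in (0 : ℝ)..1,
        (1 - s) * iteratedPartialDeriv 3 i f (update (ξ ω) i (s * ξ ω i))) ∂μ := by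
  have hcont : ∀ k ≤ 3, Continuous (iteratedPartialDeriv k i f) := fun k hk =>
    continuous_iteratedPartialDeriv hf (by exact_mod_cast hk) i
  have hcont3 := hcont 3 le_rfl
  have hmoment : ∀ k ≤ 3, Integrable (fun ω => ξ ω i ^ k) μ := fun k hk =>
    integrable_pow_of_integrable_abs_pow (by fun_prop) hk hm3
  have hR : Continuous fun x => ∫ s in (0 : ℝ)..1,
      (1 - s) * iteratedPartialDeriv 3 i f (update x i (s * x i)) :=
    intervalIntegral.continuous_parametric_intervalIntegral_of_continuous' (by fun_prop) 0 1
  have hRB : ∀ x, |∫ s in (0 : ℝ)..1,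
      (1 - s) * iteratedPartialDeriv 3 i f (update x i (s * x i))| ≤ B := fun _ =>
    abs_intervalIntegral_zero_one_le fun s hs => by
      rw [abs_mul]
      exact (mul_le_of_le_one_left (abs_nonneg _)
        (abs_le.2 ⟨by linarith [hs.2], by linarith [hs.1]⟩)).trans (hB 3 le_rfl _)
  have hfactor : ∀ k ≤ 3, ∫ ω, ξ ω i ^ k *
      iteratedPartialDeriv k i f (update (ξ ω) i 0) ∂μ =
      (∫ ω, ξ ω i ^ k ∂μ) * ∫ ω, iteratedPartialDeriv k i f (update (ξ ω) i 0) ∂μ :=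
    fun k hk => hindep.integral_fun_comp_mul_comp (by fun_prop) (by fun_prop)
      (continuous_pow k).aestronglyMeasurable (hcont k hk).aestronglyMeasurable
  have hint : ∀ k ≤ 3, Integrable (fun ω => ξ ω i ^ k *
      iteratedPartialDeriv k i f (update (ξ ω) i 0)) μ := fun k hk =>
    (hmoment k hk).mul_comp_of_abs_le (Y := fun ω => update (ξ ω) i 0) (by fun_prop)
      (hcont k hk).measurable fun _ => hB k hk _
  have hexpand : (fun ω => ξ ω i * iteratedPartialDeriv 1 i f (ξ ω)) = fun ω =>
      ξ ω i ^ 1 * iteratedPartialDeriv 1 i f (update (ξ ω) i 0) +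
      ξ ω i ^ 2 * iteratedPartialDeriv 2 i f (update (ξ ω) i 0) +
      ξ ω i ^ 3 * ∫ s in (0 : ℝ)..1,
        (1 - s) * iteratedPartialDeriv 3 i f (update (ξ ω) i (s * ξ ω i)) :=
    funext fun ω => by rw [iteratedPartialDeriv_one_eq hf]; simp only [smul_eq_mul]; ring
  rw [hexpand, integral_add, integral_add, hfactor 1 (by norm_num), hfactor 2 (by norm_num)]
  · simp only [pow_one, hm1, hm2]
    ring
  · exact hint 1 (by norm_num)
  · exact hint 2 (by norm_num)
  · exact (hint 1 (by norm_num)).add (hint 2 (by norm_num))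
  · exact (hmoment 3 le_rfl).mul_comp_of_abs_le hξ hR.measurable hRB

end Stein

theorem stein_formula_third_order_general (n : ℕ)
    {Ω : Type*} [MeasurableSpace Ω] (μ : Measure Ω) [IsProbabilityMeasure μ]
    (ξ : Ω → Fin n → ℝ) (hmeas : ∀ i, Measurable fun ω => ξ ω i)
    (hindep : iIndepFun (fun i ω => ξ ω i) μ)
    (hm1 : ∀ i, ∫ ω, ξ ω i ∂μ = 0)
    (hm2 : ∀ i, ∫ ω, (ξ ω i) ^ 2 ∂μ = 1)
    (hm3 : ∀ i, Integrable (fun ω => |ξ ω i| ^ 3) μ)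
    (f : (Fin n → ℝ) → ℝ) (hf : ContDiff ℝ 3 f)
    (pd : ℕ → Fin n → (Fin n → ℝ) → ℝ)
    (hpd : pd = fun k i x => iteratedDeriv k (fun s => f (Function.update x i s)) (x i))
    (B : ℝ) (hbddpd : ∀ k ≤ 3, ∀ i x, |pd k i x| ≤ B)
    (L : (Fin n → ℝ) → ℝ)
    (hL : L = fun x => (∑ i, pd 2 i x) - ∑ i, x i * pd 1 i x) :
    ∫ ω, L (ξ ω) ∂μ =
      (∑ i, ∫ ω, (ξ ω i) *
        ∫ s in (0:ℝ)..1, pd 3 i (Function.update (ξ ω) i (s * ξ ω i)) ∂volume ∂μ) -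
      ∑ i, ∫ ω, (ξ ω i) ^ 3 *
        ∫ s in (0:ℝ)..1, (1 - s) * pd 3 i (Function.update (ξ ω) i (s * ξ ω i)) ∂volume ∂μ := by
  obtain rfl : pd = fun k i => iteratedPartialDeriv k i f := hpd
  subst hL
  have hξ : Measurable ξ := measurable_pi_lambda _ hmeas
  have hξi : ∀ i, Integrable (fun ω => ξ ω i) μ := fun i => by
    simpa using integrable_pow_of_integrable_abs_pow (p := 1) (hmeas i).aestronglyMeasurable
      (by norm_num) (hm3 i)
  have hcont : ∀ k ≤ 3, ∀ i, Continuous (iteratedPartialDeriv k i f) := fun k hk =>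
    continuous_iteratedPartialDeriv hf (by exact_mod_cast hk)
  have hint2 : ∀ i ∈ univ, Integrable (fun ω => iteratedPartialDeriv 2 i f (ξ ω)) μ := fun i _ =>
    .of_bound ((hcont 2 (by norm_num) i).measurable.comp hξ).aestronglyMeasurable B
      (ae_of_all _ fun _ => hbddpd 2 (by norm_num) i _)
  have hint1 : ∀ i ∈ univ, Integrable (fun ω => ξ ω i * iteratedPartialDeriv 1 i f (ξ ω)) μ :=
    fun i _ => (hξi i).mul_comp_of_abs_le hξ (hcont 1 (by norm_num) i).measurable
      (hbddpd 1 (by norm_num) i)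
  simp only
  rw [integral_sub (integrable_finsetSum _ hint2) (integrable_finsetSum _ hint1),
    integral_finsetSum _ hint2, integral_finsetSum _ hint1, ← sum_sub_distrib, ← sum_sub_distrib]
  refine sum_congr rfl fun i _ => ?_
  rw [integral_iteratedPartialDeriv_two_eq hξ (hξi i) hf (fun k hk => hbddpd k hk i),
    integral_mul_iteratedPartialDeriv_one_eq hξ (hindep.indepFun_update hmeas i 0) (hm1 i) (hm2 i)
      (hm3 i) hf (fun k hk => hbddpd k hk i)]
  ring

/-- Third-order Stein-type formula for the Ornstein–Uhlenbeck generator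
`L f(x) = Δf(x) - ⟨x, ∇f(x)⟩`: if `ξ` has independent coordinates with
`Eξᵢ = 0`, `Eξᵢ² = 1`, `E|ξᵢ|³ < ∞`, then for `C³`-smooth `f` with bounded
derivatives up to order 3,
`E[Lf(ξ)] = ∑ᵢ E[ξᵢ ∫₀¹ ∂ᵢ³f(ξ⁽ⁱ⁾ + sξᵢeᵢ) ds]
  - ∑ᵢ E[ξᵢ³ ∫₀¹ (1-s) ∂ᵢ³f(ξ⁽ⁱ⁾ + sξᵢeᵢ) ds]`. -/
theorem stein_formula_third_order (n : ℕ)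
    {Ω : Type*} [MeasurableSpace Ω] (μ : Measure Ω) [IsProbabilityMeasure μ]
    (ξ : Ω → Fin n → ℝ) (hmeas : ∀ i, Measurable fun ω => ξ ω i)
    (hindep : iIndepFun (fun i ω => ξ ω i) μ)
    (hm1 : ∀ i, ∫ ω, ξ ω i ∂μ = 0)
    (hm2 : ∀ i, ∫ ω, (ξ ω i) ^ 2 ∂μ = 1)
    (hm3 : ∀ i, Integrable (fun ω => |ξ ω i| ^ 3) μ)
    (f : (Fin n → ℝ) → ℝ) (hf : ContDiff ℝ 3 f)
    (pd : ℕ → Fin n → (Fin n → ℝ) → ℝ)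
    (hpd : pd = fun k i x => iteratedDeriv k (fun s => f (Function.update x i s)) (x i))
    (B : ℝ) (hbdd : ∀ x, |f x| ≤ B) (hbddpd : ∀ k ≤ 3, ∀ i x, |pd k i x| ≤ B)
    (L : (Fin n → ℝ) → ℝ)
    (hL : L = fun x => (∑ i, pd 2 i x) - ∑ i, x i * pd 1 i x) :
    ∫ ω, L (ξ ω) ∂μ =
      (∑ i, ∫ ω, (ξ ω i) *
        ∫ s in (0:ℝ)..1, pd 3 i (Function.update (ξ ω) i (s * ξ ω i)) ∂volume ∂μ) -
      ∑ i, ∫ ω, (ξ ω i) ^ 3 *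
        ∫ s in (0:ℝ)..1, (1 - s) * pd 3 i (Function.update (ξ ω) i (s * ξ ω i)) ∂volume ∂μ :=
  stein_formula_third_order_general n μ ξ hmeas hindep hm1 hm2 hm3 f hf pd hpd B hbddpd L hL
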